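/- For all indices u, v ∈ {1,…,n} and all r ∈ ℝ^n: −D[u | v](r) equals ∂_u∂_v g(r) if both u, v ∈ I, equals −∂_u∂_v g(r) if both u, v ∈ J, and equals 0 if u and v lie in different blocks of the partition. (This is the recovery h(X,Y) = −D_M[X|Y] of the quasi-Hessian metric from the canonical divergence, combined with the coordinate expression h = Σ_{i,k∈I} ∂_i∂_k g dξ_i dξ_k − Σ_{j,l∈J} ∂_j∂_l g dξ_j dξ_l of Proposition 2.5.) -/

import Mathlib

/-!
Statement 8: recovery of the quasi-Hessian metric from the canonical
divergence: `-D[u|v](r) = ∂_u∂_v g(r)` if `u, v ∈ I`, `= -∂_u∂_v g(r)` if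
`u, v ∈ J`, and `= 0` if `u` and `v` lie in different blocks.
-/

/-- Partial derivative in the k-th coordinate. -/
noncomputable def pder {n : ℕ} (k : Fin n) (g : (Fin n → ℝ) → ℝ) : (Fin n → ℝ) → ℝ :=
  fun a => deriv (fun t => g (Function.update a k t)) (a k)

/-- The canonical divergence `D(a,b)` associated to a generating function `g`
and a partition `I ⊔ J` of the index set. -/
noncomputable def canDiv {n : ℕ} (I J : Finset (Fin n)) (g : (Fin n → ℝ) → ℝ)
    (a b : Fin n → ℝ) : ℝ :=
  g a - g b - ∑ j ∈ J, pder j g a * (a j - b j) + ∑ i ∈ I, pder i g b * (b i - a i)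

/-- Partial derivative in the u-th coordinate of the first argument. -/
noncomputable def dFst {n : ℕ} (u : Fin n) (F : (Fin n → ℝ) → (Fin n → ℝ) → ℝ) :
    (Fin n → ℝ) → (Fin n → ℝ) → ℝ :=
  fun a b => deriv (fun t => F (Function.update a u t) b) (a u)

/-- Partial derivative in the u-th coordinate of the second argument. -/
noncomputable def dSnd {n : ℕ} (u : Fin n) (F : (Fin n → ℝ) → (Fin n → ℝ) → ℝ) :
    (Fin n → ℝ) → (Fin n → ℝ) → ℝ :=
  fun a b => deriv (fun t => F a (Function.update b u t)) (b u)

/-!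
As a function of `b_v`, `D(a, b)` has derivative
`[v ∈ J] ∂_v g(a) + ∑_{i ∈ I} ∂_v∂_i g(b) (b_i - a_i)` plus terms depending on `b` only.
Differentiating this in `a_u` and putting `a = b = r` leaves
`[v ∈ J] ∂_u∂_v g(r) - [u ∈ I] ∂_v∂_u g(r) = ([v ∈ J] - [u ∈ I]) ∂_u∂_v g(r)`, by the symmetry
of the second derivative of the `C²` function `g`; disjointness of `I` and `J` gives the cases.
-/

open Function

section PartialDerivative

variable {n : ℕ} {f : (Fin n → ℝ) → ℝ}

theorem HasFDerivAt.hasDerivAt_comp_update {f' : (Fin n → ℝ) →L[ℝ] ℝ} {a : Fin n → ℝ}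
    (hf : HasFDerivAt f f' a) (k : Fin n) :
    HasDerivAt (fun t => f (update a k t)) (f' (Pi.single k 1)) (a k) := by
  rw [← update_eq_self k a] at hf
  exact hf.comp_hasDerivAt (a k) (hasDerivAt_update a k (a k))

theorem hasDerivAt_update_apply (b : Fin n → ℝ) (v i : Fin n) (t : ℝ) :
    HasDerivAt (fun s => update b v s i) ((Pi.single v 1 : Fin n → ℝ) i) t :=
  hasDerivAt_pi.1 (hasDerivAt_update b v t) i

theorem pder_eq_fderiv {a : Fin n → ℝ} (hf : DifferentiableAt ℝ f a) (k : Fin n) :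
    pder k f a = fderiv ℝ f a (Pi.single k 1) :=
  (hf.hasFDerivAt.hasDerivAt_comp_update k).deriv

theorem hasDerivAt_pder {a : Fin n → ℝ} (hf : DifferentiableAt ℝ f a) (k : Fin n) :
    HasDerivAt (fun t => f (update a k t)) (pder k f a) (a k) := by
  rw [pder_eq_fderiv hf]
  exact hf.hasFDerivAt.hasDerivAt_comp_update k

theorem pder_eq_fun_fderiv (hf : Differentiable ℝ f) (k : Fin n) :
    pder k f = fun a => fderiv ℝ f a (Pi.single k 1) :=
  funext fun a => pder_eq_fderiv (hf a) k

theorem ContDiff.pder {m : WithTop ℕ∞} (hf : ContDiff ℝ (m + 1) f) (k : Fin n) :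
    ContDiff ℝ m (pder k f) := by
  rw [pder_eq_fun_fderiv (hf.differentiable (by simp))]
  exact (hf.fderiv_right le_rfl).clm_apply contDiff_const

theorem pder_pder_eq_fderiv_fderiv (hf : ContDiff ℝ 2 f) (u v : Fin n) (r : Fin n → ℝ) :
    pder u (pder v f) r = fderiv ℝ (fderiv ℝ f) r (Pi.single u 1) (Pi.single v 1) := by
  have hf' : Differentiable ℝ (fderiv ℝ f) :=
    (hf.fderiv_right (m := 1) le_rfl).differentiable one_ne_zero
  rw [pder_eq_fderiv ((hf.pder (m := 1) v).differentiable one_ne_zero r),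
    pder_eq_fun_fderiv (hf.differentiable two_ne_zero),
    fderiv_clm_apply (hf' r) (differentiableAt_const _)]
  simp

theorem pder_comm (hf : ContDiff ℝ 2 f) (u v : Fin n) (r : Fin n → ℝ) :
    pder u (pder v f) r = pder v (pder u f) r := by
  rw [pder_pder_eq_fderiv_fderiv hf, pder_pder_eq_fderiv_fderiv hf]
  exact (hf.contDiffAt.isSymmSndFDerivAt (by simp)) _ _

end PartialDerivative

section CanonicalDivergence

variable {n : ℕ} (I J : Finset (Fin n)) {g : (Fin n → ℝ) → ℝ}

theorem dSnd_canDiv (hg : ContDiff ℝ 2 g) (v : Fin n) (a b : Fin n → ℝ) :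
    dSnd v (canDiv I J g) a b =
      -pder v g b + (if v ∈ J then pder v g a else 0)
        + ∑ i ∈ I, pder v (pder i g) b * (b i - a i)
        + (if v ∈ I then pder v g b else 0) := by
  have hg₁ : Differentiable ℝ g := hg.differentiable two_ne_zero
  have H : HasDerivAt (fun t => canDiv I J g a (update b v t))
      (0 - pder v g b - ∑ j ∈ J, pder j g a * (0 - (Pi.single v 1 : Fin n → ℝ) j)
        + ∑ i ∈ I, (pder v (pder i g) b * (update b v (b v) i - a i)
            + pder i g (update b v (b v)) * ((Pi.single v 1 : Fin n → ℝ) i - 0))) (b v) := by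
    refine (((hasDerivAt_const _ _).sub (hasDerivAt_pder (hg₁ b) v)).sub
      (HasDerivAt.fun_sum fun j _ => ?_)).add (HasDerivAt.fun_sum fun i _ => ?_)
    · exact ((hasDerivAt_const _ _).sub (hasDerivAt_update_apply b v j _)).const_mul _
    · exact (hasDerivAt_pder (((hg.pder (m := 1) i).differentiable one_ne_zero) b) v).mul
        ((hasDerivAt_update_apply b v i _).sub (hasDerivAt_const _ _))
  rw [dSnd, H.deriv]
  simp only [update_eq_self, Pi.single_apply, zero_sub, sub_zero, mul_neg, mul_ite, mul_one,
    mul_zero, Finset.sum_neg_distrib, Finset.sum_add_distrib, Finset.sum_ite_eq']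
  ring

theorem dFst_dSnd_canDiv_self (hg : ContDiff ℝ 2 g) (u v : Fin n) (r : Fin n → ℝ) :
    dFst u (dSnd v (canDiv I J g)) r r =
      ((if v ∈ J then 1 else 0) - (if u ∈ I then 1 else 0)) * pder u (pder v g) r := by
  have hpv : Differentiable ℝ (pder v g) := (hg.pder (m := 1) v).differentiable one_ne_zero
  have H : HasDerivAt (fun t => dSnd v (canDiv I J g) (update r u t) r)
      (0 + (if v ∈ J then pder u (pder v g) r else 0)
        + ∑ i ∈ I, pder v (pder i g) r * (0 - (Pi.single u 1 : Fin n → ℝ) i) + 0) (r u) := by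
    simp only [dSnd_canDiv I J hg]
    refine ((((hasDerivAt_const _ _).add ?_).add
      (HasDerivAt.fun_sum fun i _ => ?_)).add (hasDerivAt_const _ _))
    · split_ifs
      · exact hasDerivAt_pder (hpv r) u
      · exact hasDerivAt_const _ _
    · exact ((hasDerivAt_const _ _).sub (hasDerivAt_update_apply r u i _)).const_mul _
  rw [dFst, H.deriv, pder_comm hg u v]
  simp only [Pi.single_apply, zero_sub, mul_neg, mul_ite, mul_one, mul_zero,
    Finset.sum_neg_distrib, Finset.sum_ite_eq']
  split_ifs <;> ring

end CanonicalDivergence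

theorem metric_from_divergence_general {n : ℕ} (I J : Finset (Fin n))
    (hdisj : Disjoint I J)
    (g : (Fin n → ℝ) → ℝ) (hg : ContDiff ℝ (⊤ : ℕ∞) g)
    (u v : Fin n) (r : Fin n → ℝ) :
    (u ∈ I → v ∈ I → -(dFst u (dSnd v (canDiv I J g)) r r) = pder u (pder v g) r) ∧
    (u ∈ J → v ∈ J → -(dFst u (dSnd v (canDiv I J g)) r r) = -(pder u (pder v g) r)) ∧
    (u ∈ I → v ∈ J → -(dFst u (dSnd v (canDiv I J g)) r r) = 0) ∧
    (u ∈ J → v ∈ I → -(dFst u (dSnd v (canDiv I J g)) r r) = 0) := by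
  rw [dFst_dSnd_canDiv_self I J (hg.of_le (WithTop.coe_le_coe.2 le_top)) u v r]
  have hI {k : Fin n} (hk : k ∈ J) : k ∉ I := Finset.disjoint_right.mp hdisj hk
  grind

theorem metric_from_divergence {n : ℕ} (I J : Finset (Fin n))
    (hdisj : Disjoint I J) (hunion : I ∪ J = Finset.univ)
    (g : (Fin n → ℝ) → ℝ) (hg : ContDiff ℝ (⊤ : ℕ∞) g)
    (u v : Fin n) (r : Fin n → ℝ) :
    (u ∈ I → v ∈ I → -(dFst u (dSnd v (canDiv I J g)) r r) = pder u (pder v g) r) ∧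
    (u ∈ J → v ∈ J → -(dFst u (dSnd v (canDiv I J g)) r r) = -(pder u (pder v g) r)) ∧
    (u ∈ I → v ∈ J → -(dFst u (dSnd v (canDiv I J g)) r r) = 0) ∧
    (u ∈ J → v ∈ I → -(dFst u (dSnd v (canDiv I J g)) r r) = 0) :=
  metric_from_divergence_general I J hdisj g hg u v r
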